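/- arXiv:2004.07643 — 2 statements merged into one kernel-verified Lean document; each statement's English description precedes it below -/
import Mathlib

section
/- Let X ⊆ {0,1}^ℤ be a subshift and X̃ its hereditary closure. Then the topological entropy of X̃ is at least d(X,S): h(X̃,S) ≥ d(X,S). -/
/-!
If `W` is an allowed word of length `n` with `k` ones, every word obtained from `W` by turning
some of its ones into zeros is allowed in the hereditary closure, so `2 ^ k ≤ |L_n(X̃)|`.
On the other hand, for a shift-invariant probability measure `μ` concentrated on `X`, the
expected number of ones in the first `n` coordinates is `n μ([1])`, and it cannot exceed the
maximal number of ones in a word of `L_n(X)`. Hence `μ([1]) ≤ log₂ |L_n(X̃)| / n` for every `n`.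
-/

open MeasureTheory Filter Real
open scoped ENNReal

attribute [local instance] Classical.propDecidable

/-- The two-sided binary sequence space `{0,1}^ℤ`. -/
abbrev Omega : Type := ℤ → Bool

/-- The left shift. -/
def shift (x : Omega) : Omega := fun n => x (n + 1)

/-- The cylinder set of a word `W` of length `n`, read from coordinate `0`. -/
def cyl (n : ℕ) (W : Fin n → Bool) : Set Omega := {x | ∀ i : Fin n, x ((i : ℕ) : ℤ) = W i}

/-- The language of `X`: words of length `n` appearing (at position 0) in some point of `X`. -/
def lang (X : Set Omega) (n : ℕ) : Set (Fin n → Bool) :=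
  {W | ∃ x ∈ X, ∀ i : Fin n, x ((i : ℕ) : ℤ) = W i}

/-- Number of ones in a word. -/
def ones {n : ℕ} (W : Fin n → Bool) : ℕ := (Finset.univ.filter fun i => W i = true).card

/-- `maxOnes X n` is the maximal number of ones in an allowed word of length `n`. -/
noncomputable def maxOnes (X : Set Omega) (n : ℕ) : ℕ :=
  (Finset.univ.filter fun W : Fin n → Bool => W ∈ lang X n).sup ones

/-- `d(X,S)`: the supremum over shift-invariant Borel probability measures concentrated
on `X` of the measure of the cylinder `[1] = {x | x 0 = true}`. -/
noncomputable def dsup (X : Set Omega) : ℝ :=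
  ⨆ μ : {μ : Measure Omega // IsProbabilityMeasure μ ∧ μ X = 1 ∧ Measure.map shift μ = μ},
    ((μ : Measure Omega) {x | x 0 = true}).toReal

/-- The hereditary closure of `X`. -/
def her (X : Set Omega) : Set Omega := {z | ∃ x ∈ X, ∀ i, z i ≤ x i}

lemma mem_lang_her_of_le {X : Set Omega} {n : ℕ} {V W : Fin n → Bool} (hVW : V ≤ W)
    (hW : W ∈ lang X n) : V ∈ lang (her X) n := by
  obtain ⟨x, hx, hxW⟩ := hW
  refine ⟨fun j => if h : 0 ≤ j ∧ j < n then V ⟨j.toNat, by omega⟩ else x j, ⟨x, hx, fun j => ?_⟩,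
    fun i => by simp⟩
  dsimp only
  split_ifs with h
  · simpa [← hxW, Int.toNat_of_nonneg h.1] using hVW ⟨j.toNat, by omega⟩
  · exact le_rfl

lemma two_pow_ones_le_ncard_lang_her {X : Set Omega} {n : ℕ} {W : Fin n → Bool}
    (hW : W ∈ lang X n) : 2 ^ ones W ≤ (lang (her X) n).ncard := by
  set support := Finset.univ.filter fun i => W i = true
  let indicator : Finset (Fin n) → Fin n → Bool := fun S i => decide (i ∈ S)
  have hinj : Function.Injective indicator := fun S S' h => by
    ext i; simpa [indicator] using congrFun h i
  have hsub : support.powerset.image indicator ⊆ (lang (her X) n).toFinset := by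
    simp only [Finset.subset_iff, Finset.mem_image, Finset.mem_powerset, Set.mem_toFinset]
    rintro _ ⟨S, hS, rfl⟩
    refine mem_lang_her_of_le (fun i => ?_) hW
    by_cases hi : i ∈ S
    · simp [indicator, hi, (by simpa [support] using hS hi : W i = true)]
    · simp [indicator, hi]
  calc 2 ^ ones W = (support.powerset.image indicator).card := by
        rw [Finset.card_image_of_injective _ hinj, Finset.card_powerset]; rfl
    _ ≤ (lang (her X) n).toFinset.card := Finset.card_le_card hsub
    _ = (lang (her X) n).ncard := (Set.ncard_eq_toFinset_card' _).symm

lemma maxOnes_le_logb_ncard_lang_her {X : Set Omega} (hX : X.Nonempty) (n : ℕ) :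
    (maxOnes X n : ℝ) ≤ logb 2 (lang (her X) n).ncard := by
  obtain ⟨x, hx⟩ := hX
  obtain ⟨W, hW, hmax⟩ := Finset.exists_mem_eq_sup
    (Finset.univ.filter fun W : Fin n → Bool => W ∈ lang X n)
    ⟨_, Finset.mem_filter.2 ⟨Finset.mem_univ _, x, hx, fun _ => rfl⟩⟩ ones
  have hcard : ((2 : ℕ) ^ maxOnes X n : ℝ) ≤ (lang (her X) n).ncard := by
    rw [maxOnes, hmax]
    exact_mod_cast two_pow_ones_le_ncard_lang_her (Finset.mem_filter.1 hW).2
  rw [le_logb_iff_rpow_le one_lt_two (lt_of_lt_of_le (by positivity) hcard)]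
  exact_mod_cast hcard

lemma ones_le_maxOnes {X : Set Omega} {x : Omega} (hx : x ∈ X) (n : ℕ) :
    ones (fun i : Fin n => x i) ≤ maxOnes X n :=
  Finset.le_sup (Finset.mem_filter.2 ⟨Finset.mem_univ _, x, hx, fun _ => rfl⟩)

lemma measurable_shift : Measurable shift :=
  measurable_pi_lambda _ fun _ => measurable_pi_apply _

lemma measurableSet_coord_eq_true (k : ℤ) : MeasurableSet {x : Omega | x k = true} :=
  show MeasurableSet ((fun x : Omega => x k) ⁻¹' {true}) from
    measurable_pi_apply k (measurableSet_singleton true)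

lemma measure_coord_eq_true_of_map_shift {μ : Measure Omega} (hμ : μ.map shift = μ) (k : ℕ) :
    μ {x | x k = true} = μ {x | x 0 = true} := by
  induction k with
  | zero => rfl
  | succ k ih =>
    have hpre : shift ⁻¹' {x | x k = true} = {x | x (k + 1 : ℕ) = true} := by
      ext x; simp [shift]
    rw [← ih, ← hpre, ← Measure.map_apply measurable_shift (measurableSet_coord_eq_true _), hμ]

lemma natCast_ones_eq_sum_indicator (n : ℕ) (x : Omega) :
    (ones (fun i : Fin n => x i) : ℝ≥0∞) = ∑ i : Fin n, {y : Omega | y i = true}.indicator 1 x := by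
  simp only [ones, Finset.natCast_card_filter, Set.indicator_apply, Set.mem_ofPred_eq,
    Pi.one_apply]

lemma measurable_natCast_ones (n : ℕ) :
    Measurable fun x : Omega => (ones (fun i : Fin n => x i) : ℝ≥0∞) := by
  simp_rw [natCast_ones_eq_sum_indicator]
  exact Finset.measurable_sum _ fun i _ =>
    measurable_one.indicator (measurableSet_coord_eq_true _)

lemma lintegral_ones_eq_sum (μ : Measure Omega) (n : ℕ) :
    ∫⁻ x, (ones (fun i : Fin n => x i) : ℝ≥0∞) ∂μ = ∑ i : Fin n, μ {x | x i = true} := by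
  simp_rw [natCast_ones_eq_sum_indicator]
  rw [lintegral_finsetSum _ fun i _ => measurable_one.indicator (measurableSet_coord_eq_true _)]
  simp_rw [lintegral_indicator_one (measurableSet_coord_eq_true _)]

lemma ae_mem_of_subset_of_measure_eq_one {α : Type*} [MeasurableSpace α] {μ : Measure α}
    [IsProbabilityMeasure μ] {X s : Set α} (hX : μ X = 1) (hs : MeasurableSet s) (hXs : X ⊆ s) :
    ∀ᵐ x ∂μ, x ∈ s :=
  (prob_compl_eq_zero_iff hs).2 (le_antisymm prob_le_one (hX ▸ measure_mono hXs))

lemma natCast_mul_measure_le_maxOnes {X : Set Omega} {μ : Measure Omega}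
    [IsProbabilityMeasure μ] (hX : μ X = 1) (hμ : μ.map shift = μ) (n : ℕ) :
    n * μ {x | x 0 = true} ≤ maxOnes X n := by
  let count : Omega → ℝ≥0∞ := fun x => ones (fun i : Fin n => x i)
  have hae : ∀ᵐ x ∂μ, count x ≤ maxOnes X n :=
    ae_mem_of_subset_of_measure_eq_one (s := {x | count x ≤ maxOnes X n}) hX
      (measurableSet_le (measurable_natCast_ones n) measurable_const) fun x hx =>
        show (ones _ : ℝ≥0∞) ≤ _ by exact_mod_cast ones_le_maxOnes hx n
  calc (n : ℝ≥0∞) * μ {x | x 0 = true} = ∑ i : Fin n, μ {x | x i = true} := by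
        simp [measure_coord_eq_true_of_map_shift hμ]
    _ = ∫⁻ x, count x ∂μ := (lintegral_ones_eq_sum μ n).symm
    _ ≤ ∫⁻ _, (maxOnes X n : ℝ≥0∞) ∂μ := lintegral_mono_ae hae
    _ = maxOnes X n := by simp

theorem stmt8_general (X : Set Omega)
    (htil : ℝ)
    (hent : Tendsto (fun n : ℕ => logb 2 (((lang (her X) n)).ncard) / n) atTop (nhds htil)) :
    dsup X ≤ htil := by
  have htil_nonneg : 0 ≤ htil := ge_of_tendsto' hent fun n =>
    div_nonneg (div_nonneg (log_natCast_nonneg _) (log_nonneg one_le_two)) n.cast_nonneg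
  -- `Real.iSup_le` needs `0 ≤ htil`: over an empty index type `⨆` is `0`.
  refine Real.iSup_le ?_ htil_nonneg
  rintro ⟨μ, hprob, hX, hμ⟩
  have hXne : X.Nonempty := nonempty_of_measure_ne_zero (μ := μ) (by simp [hX])
  refine ge_of_tendsto hent (eventually_atTop.2 ⟨1, fun n hn => ?_⟩)
  have hn_pos : (0 : ℝ) < n := by exact_mod_cast hn
  have hmul : (n : ℝ) * (μ {x | x 0 = true}).toReal ≤ maxOnes X n := by
    simpa using ENNReal.toReal_mono (ENNReal.natCast_ne_top _)
      (natCast_mul_measure_le_maxOnes hX hμ n)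
  calc (μ {x | x 0 = true}).toReal ≤ maxOnes X n / n := by rwa [le_div_iff₀' hn_pos]
    _ ≤ logb 2 (lang (her X) n).ncard / n := by
      gcongr; exact maxOnes_le_logb_ncard_lang_her hXne n

/-- the topological entropy of the hereditary closure dominates the density:
`h(X̃,S) ≥ d(X,S)`. -/
theorem stmt8 (X : Set Omega) (hcl : IsClosed X) (hne : X.Nonempty)
    (hinv : shift '' X = X)
    (htil : ℝ)
    (hent : Tendsto (fun n : ℕ => logb 2 (((lang (her X) n)).ncard) / n) atTop (nhds htil)) :
    dsup X ≤ htil :=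
  stmt8_general X htil hent
end

section
/- Suppose ν is an invariant measure on a subshift X ⊆ {0,1}^ℤ such that κ = ν * B_{1/2,1/2} has full support on X̃ and satisfies the Gibbs property κ(C) ≥ a·2^{-|C|h} for all C ∈ L(X̃), where h = h(X̃,S). Then for every n ∈ ℕ: 0 ≤ (1/n) log₂(ℓ_n) - h ≤ (1/n) log₂(1/a), where ℓ_n = |L_n(X̃)|. -/
open MeasureTheory Filter Real
open scoped ENNReal

attribute [local instance] Classical.propDecidable

/-- Coordinatewise multiplication `Q(x,y)_i = x_i · y_i`. -/
def Qmul (p : Omega × Omega) : Omega := fun i => p.1 i && p.2 i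

/-! Since `X̃` is shift-invariant, splitting words gives `ℓ_{m+n} ≤ ℓ_m ℓ_n`, so by Fekete's lemma
`h = inf_n (1/n) log₂ ℓ_n`. For the upper bound, the cylinders of the `ℓ_n` words of `L_n(X̃)` are
disjoint, so summing the Gibbs bound over them gives `ℓ_n · a · 2^{-nh} ≤ κ(Ω) = 1`. -/

lemma measurable_Qmul : Measurable Qmul := by
  unfold Qmul
  fun_prop

lemma measurableSet_cyl (n : ℕ) (W : Fin n → Bool) : MeasurableSet (cyl n W) := by
  have : cyl n W = ⋂ i : Fin n, (fun x : Omega => x ((i : ℕ) : ℤ)) ⁻¹' {W i} := by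
    ext x
    simp [cyl]
  rw [this]
  exact .iInter fun i => measurable_pi_apply _ (measurableSet_singleton _)

open Function in
lemma pairwise_disjoint_cyl (n : ℕ) : Pairwise (Disjoint on cyl n) :=
  fun _ _ hWW' => Set.disjoint_left.2 fun _ hx hx' =>
    hWW' (funext fun i => (hx i).symm.trans (hx' i))

lemma ncard_mul_le_of_le_measureReal_cyl (μ : Measure Omega) [IsProbabilityMeasure μ] {n : ℕ}
    (s : Set (Fin n → Bool)) {c : ℝ} (hc : ∀ C ∈ s, c ≤ μ.real (cyl n C)) : s.ncard * c ≤ 1 := by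
  set S := s.toFinite.toFinset
  calc (s.ncard : ℝ) * c = ∑ _C ∈ S, c := by
        rw [Finset.sum_const, nsmul_eq_mul, Set.ncard_eq_toFinset_card s]
    _ ≤ ∑ C ∈ S, μ.real (cyl n C) := Finset.sum_le_sum fun C hC => hc C (by simpa [S] using hC)
    _ = μ.real (⋃ C ∈ S, cyl n C) :=
        (measureReal_biUnion_finset ((pairwise_disjoint_cyl n).set_pairwise _)
          fun C _ => measurableSet_cyl n C).symm
    _ ≤ 1 := measureReal_le_one

lemma subset_her (X : Set Omega) : X ⊆ her X := fun x hx => ⟨x, hx, fun _ => le_rfl⟩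

lemma mapsTo_shift_her {X : Set Omega} (hX : Set.MapsTo shift X X) :
    Set.MapsTo shift (her X) (her X) :=
  fun _ ⟨x, hx, hzx⟩ => ⟨shift x, hX hx, fun i => hzx (i + 1)⟩

lemma shift_iterate_apply (m : ℕ) (x : Omega) (k : ℤ) : shift^[m] x k = x (k + m) := by
  induction m generalizing x with
  | zero => simp
  | succ m ih =>
    rw [Function.iterate_succ_apply, ih]
    simp only [shift]
    push_cast
    ring_nf

lemma lang_nonempty {Y : Set Omega} (hY : Y.Nonempty) (n : ℕ) : (lang Y n).Nonempty :=
  let ⟨x, hx⟩ := hY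
  ⟨_, x, hx, fun _ => rfl⟩

lemma ncard_lang_pos {Y : Set Omega} (hY : Y.Nonempty) (n : ℕ) : 0 < (lang Y n).ncard :=
  (Set.ncard_pos (Set.toFinite _)).2 (lang_nonempty hY n)

lemma ncard_lang_add_le {Y : Set Omega} (hY : Set.MapsTo shift Y Y) (m n : ℕ) :
    (lang Y (m + n)).ncard ≤ (lang Y m).ncard * (lang Y n).ncard := by
  rw [← Set.ncard_prod]
  refine Set.ncard_le_ncard_of_injOn (Fin.appendEquiv m n).symm ?_
    (Fin.appendEquiv m n).symm.injective.injOn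
  rintro W ⟨x, hx, hxW⟩
  refine ⟨⟨x, hx, fun i => hxW (Fin.castAdd n i)⟩, ⟨shift^[m] x, hY.iterate m hx, fun j => ?_⟩⟩
  simp only [shift_iterate_apply, Fin.appendEquiv_symm_apply, ← hxW, Fin.val_natAdd]
  push_cast
  ring_nf

lemma subadditive_logb_ncard_lang {Y : Set Omega} (hY : Set.MapsTo shift Y Y)
    (hne : Y.Nonempty) : Subadditive fun n => logb 2 (lang Y n).ncard := by
  intro m n
  have hpos : ∀ k, (0 : ℝ) < (lang Y k).ncard := fun k => mod_cast ncard_lang_pos hne k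
  calc logb 2 (lang Y (m + n)).ncard
      ≤ logb 2 ((lang Y m).ncard * (lang Y n).ncard) :=
        logb_le_logb_of_le one_lt_two (hpos _) (by exact_mod_cast ncard_lang_add_le hY m n)
    _ = logb 2 (lang Y m).ncard + logb 2 (lang Y n).ncard :=
        logb_mul (hpos m).ne' (hpos n).ne'

lemma Subadditive.le_div_of_tendsto {u : ℕ → ℝ} (hu : Subadditive u)
    (hbdd : BddBelow (Set.range fun n => u n / n)) {h : ℝ}
    (hlim : Tendsto (fun n => u n / n) atTop (nhds h)) {n : ℕ} (hn : n ≠ 0) : h ≤ u n / n :=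
  tendsto_nhds_unique hlim (hu.tendsto_lim hbdd) ▸ hu.lim_le_div hbdd hn

lemma logb_div_sub_le_of_mul_le {L a h n : ℝ} (hL : 0 < L) (ha : 0 < a) (hn : 0 < n)
    (hLa : L * (a * 2 ^ (-n * h)) ≤ 1) : logb 2 L / n - h ≤ 1 / n * logb 2 (1 / a) := by
  have hlog := logb_le_logb_of_le one_lt_two (by positivity) hLa
  rw [logb_mul hL.ne' (by positivity), logb_mul ha.ne' (by positivity),
    logb_rpow two_pos (by norm_num), logb_one] at hlog
  rw [one_div a, logb_inv, div_sub' hn.ne', div_le_iff₀ hn]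
  field_simp
  linarith

lemma le_logb_ncard_lang_div {Y : Set Omega} (hY : Set.MapsTo shift Y Y) (hne : Y.Nonempty)
    {h : ℝ} (hent : Tendsto (fun n : ℕ => logb 2 (lang Y n).ncard / n) atTop (nhds h))
    {n : ℕ} (hn : n ≠ 0) : h ≤ logb 2 (lang Y n).ncard / n := by
  refine (subadditive_logb_ncard_lang hY hne).le_div_of_tendsto ⟨0, ?_⟩ hent hn
  rintro _ ⟨k, rfl⟩
  exact div_nonneg (logb_nonneg one_lt_two (Nat.one_le_cast.2 (ncard_lang_pos hne k)))
    k.cast_nonneg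

theorem stmt16_general (X : Set Omega) (hne : X.Nonempty)
    (hinv : shift '' X = X)
    (ν : Measure Omega) [IsProbabilityMeasure ν]
    (B : Measure Omega) [IsProbabilityMeasure B]
    (h : ℝ)
    (hent : Tendsto (fun n : ℕ => logb 2 ((lang (her X) n).ncard) / n) atTop (nhds h))
    (a : ℝ) (ha : 0 < a)
    (hGibbs : ∀ (n : ℕ) (C : Fin n → Bool), C ∈ lang (her X) n →
      a * (2 : ℝ) ^ (-(n : ℝ) * h) ≤ (Measure.map Qmul (ν.prod B) (cyl n C)).toReal) :
    ∀ n : ℕ, 1 ≤ n →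
      0 ≤ logb 2 ((lang (her X) n).ncard) / n - h ∧
      logb 2 ((lang (her X) n).ncard) / n - h ≤ (1 / n) * logb 2 (1 / a) := by
  intro n hn
  have hY : Set.MapsTo shift (her X) (her X) :=
    mapsTo_shift_her (Set.mapsTo_iff_image_subset.2 hinv.subset)
  have hYne : (her X).Nonempty := hne.mono (subset_her X)
  have := Measure.isProbabilityMeasure_map (μ := ν.prod B) measurable_Qmul.aemeasurable
  exact ⟨sub_nonneg.2 (le_logb_ncard_lang_div hY hYne hent (by omega)),
    logb_div_sub_le_of_mul_le (mod_cast ncard_lang_pos hYne n) ha (by positivity)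
      (ncard_mul_le_of_le_measureReal_cyl _ _ (hGibbs n))⟩

/-- if `κ = ν * B_{1/2,1/2}` has full support on `X̃` and satisfies the
Gibbs property with constant `a` and entropy `h = h(X̃,S)`, then for every `n ≥ 1`:
`0 ≤ (1/n)·log₂ ℓ_n − h ≤ (1/n)·log₂(1/a)` where `ℓ_n = |L_n(X̃)|`. -/
theorem stmt16 (X : Set Omega) (hcl : IsClosed X) (hne : X.Nonempty)
    (hinv : shift '' X = X)
    (ν : Measure Omega) [IsProbabilityMeasure ν] (hsupp : ν X = 1)
    (hinvν : Measure.map shift ν = ν)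
    (B : Measure Omega) [IsProbabilityMeasure B]
    (hB : ∀ (m : ℕ) (V : Fin m → Bool), B (cyl m V) = (2 : ℝ≥0∞)⁻¹ ^ m)
    (h : ℝ)
    (hent : Tendsto (fun n : ℕ => logb 2 ((lang (her X) n).ncard) / n) atTop (nhds h))
    (hfull : ∀ (n : ℕ) (C : Fin n → Bool), C ∈ lang (her X) n →
      Measure.map Qmul (ν.prod B) (cyl n C) ≠ 0)
    (a : ℝ) (ha : 0 < a)
    (hGibbs : ∀ (n : ℕ) (C : Fin n → Bool), C ∈ lang (her X) n →
      a * (2 : ℝ) ^ (-(n : ℝ) * h) ≤ (Measure.map Qmul (ν.prod B) (cyl n C)).toReal) :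
    ∀ n : ℕ, 1 ≤ n →
      0 ≤ logb 2 ((lang (her X) n).ncard) / n - h ∧
      logb 2 ((lang (her X) n).ncard) / n - h ≤ (1 / n) * logb 2 (1 / a) :=
  stmt16_general X hne hinv ν B h hent a ha hGibbs
end
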